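/- Every edge of a subgraph of the knight's graph can be the primary move of at most 3 rails and can be part of at most 6 rails in total. -/

import Mathlib

def knightsGraph (n : ℕ) : SimpleGraph (Fin n × Fin n) where
  Adj a b := (|((a.1 : ℕ) : ℤ) - ((b.1 : ℕ) : ℤ)| = 1 ∧ |((a.2 : ℕ) : ℤ) - ((b.2 : ℕ) : ℤ)| = 2) ∨
             (|((a.1 : ℕ) : ℤ) - ((b.1 : ℕ) : ℤ)| = 2 ∧ |((a.2 : ℕ) : ℤ) - ((b.2 : ℕ) : ℤ)| = 1)
  symm := by
    constructor
    intro a b h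
    rw [abs_sub_comm (((b.1 : ℕ) : ℤ)), abs_sub_comm (((b.2 : ℕ) : ℤ))]
    exact h
  loopless := by
    constructor
    intro a h
    simp at h

instance knightsGraphDecidable (n : ℕ) : DecidableRel (knightsGraph n).Adj := fun _ _ =>
  inferInstanceAs (Decidable (_ ∨ _))

/-- Displacement vector of a knight's move from `a` to `b`. -/
def vec {n : ℕ} (a b : Fin n × Fin n) : ℤ × ℤ :=
  (((b.1 : ℕ) : ℤ) - ((a.1 : ℕ) : ℤ), ((b.2 : ℕ) : ℤ) - ((a.2 : ℕ) : ℤ))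

/-- A rail in a subgraph `G` of the knight's graph: a pair of parallel edges
`(v₀,v₁)`, `(v₂,v₃)` of `G` whose cross edges `(v₀,v₂)`, `(v₁,v₃)` lie in
the knight's graph but not in `G`. -/
def IsRail {n : ℕ} (G : SimpleGraph (Fin n × Fin n)) (v₀ v₁ v₂ v₃ : Fin n × Fin n) : Prop :=
  G.Adj v₀ v₁ ∧ G.Adj v₂ v₃ ∧ vec v₀ v₁ = vec v₂ v₃ ∧
  (knightsGraph n).Adj v₀ v₂ ∧ ¬ G.Adj v₀ v₂ ∧
  (knightsGraph n).Adj v₁ v₃ ∧ ¬ G.Adj v₁ v₃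

/-- Switching a rail: delete the rail's two edges and add the two cross edges. -/
def switchRail {V : Type*} (G : SimpleGraph V) (v₀ v₁ v₂ v₃ : V) : SimpleGraph V :=
  (G.deleteEdges {s(v₀, v₁), s(v₂, v₃)}) ⊔ SimpleGraph.fromEdgeSet {s(v₀, v₂), s(v₁, v₃)}

/-!
A rail through the edge `v₀v₁` (with move `w = vec v₀ v₁`) is determined by its cross move
`d = vec v₀ v₂`, since then `v₂ = v₀ + d` and `v₃ = v₂ + w`. The cross move is a knight's move
other than `w` (else `v₂ = v₁` and the cross edge `v₀v₂` would lie in `G`) and other than `-w`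
(else `v₃ = v₀` and the cross edge `v₁v₃` would lie in `G`). That leaves `6` cross moves, of which
exactly `3` point in the positive first direction, as exactly one of `±w` does.
-/

def knightMoves : Finset (ℤ × ℤ) :=
  {(1, 2), (1, -2), (-1, 2), (-1, -2), (2, 1), (2, -1), (-2, 1), (-2, -1)}

lemma card_knightMoves_sdiff : ∀ w ∈ knightMoves, (knightMoves \ {w, -w}).card = 6 := by
  decide

lemma card_filter_fst_pos_knightMoves_sdiff : ∀ w ∈ knightMoves,
    ((knightMoves \ {w, -w}).filter (fun d => 0 < d.1)).card = 3 := by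
  decide

lemma mk_mem_knightMoves {x y : ℤ} (h : |x| = 1 ∧ |y| = 2 ∨ |x| = 2 ∧ |y| = 1) :
    (x, y) ∈ knightMoves := by
  obtain ⟨hx, hy⟩ | ⟨hx, hy⟩ := h <;>
  obtain rfl | rfl := (abs_eq (by norm_num)).1 hx <;>
  obtain rfl | rfl := (abs_eq (by norm_num)).1 hy <;>
  decide

section vec

variable {n : ℕ}

lemma vec_add_vec (a b c : Fin n × Fin n) : vec a b + vec b c = vec a c := by
  simp only [vec, Prod.mk_add_mk, sub_add_sub_cancel']

lemma vec_self (a : Fin n × Fin n) : vec a a = 0 := by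
  simp [vec]

lemma vec_injective (a : Fin n × Fin n) : Function.Injective (vec a) := by
  intro b c h
  simp only [vec, Prod.mk.injEq, sub_left_inj, Nat.cast_inj] at h
  exact Prod.ext (Fin.ext h.1) (Fin.ext h.2)

lemma vec_mem_knightMoves {a b : Fin n × Fin n} (h : (knightsGraph n).Adj a b) :
    vec a b ∈ knightMoves :=
  mk_mem_knightMoves h.symm

end vec

namespace IsRail

variable {n : ℕ} {G : SimpleGraph (Fin n × Fin n)} {v₀ v₁ v₂ v₃ : Fin n × Fin n}

lemma vec_cross_mem (hr : IsRail G v₀ v₁ v₂ v₃) :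
    vec v₀ v₂ ∈ knightMoves \ {vec v₀ v₁, -vec v₀ v₁} := by
  obtain ⟨h₀₁, -, hpar, hK₀₂, hn₀₂, -, hn₁₃⟩ := hr
  simp only [Finset.mem_sdiff, vec_mem_knightMoves hK₀₂, Finset.mem_insert,
    Finset.mem_singleton, true_and, not_or]
  constructor
  · intro h
    exact hn₀₂ (vec_injective v₀ h ▸ h₀₁)
  · intro h
    have h₃₀ : v₃ = v₀ := vec_injective v₀ <| by
      rw [← vec_add_vec v₀ v₂ v₃, h, ← hpar, neg_add_cancel, vec_self]
    exact hn₁₃ (h₃₀ ▸ h₀₁.symm)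

lemma vec_far_end (hr : IsRail G v₀ v₁ v₂ v₃) : vec v₀ v₃ = vec v₀ v₂ + vec v₀ v₁ := by
  rw [← vec_add_vec v₀ v₂ v₃, hr.2.2.1]

lemma eq_of_vec_cross_eq {v₂' v₃' : Fin n × Fin n} (hr : IsRail G v₀ v₁ v₂ v₃)
    (hr' : IsRail G v₀ v₁ v₂' v₃') (h : vec v₀ v₂ = vec v₀ v₂') : v₂ = v₂' ∧ v₃ = v₃' :=
  ⟨vec_injective v₀ h, vec_injective v₀ (by rw [hr.vec_far_end, hr'.vec_far_end, h])⟩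

end IsRail

lemma ncard_railPartners_le {n : ℕ} (G : SimpleGraph (Fin n × Fin n)) (v₀ v₁ : Fin n × Fin n)
    (P : ℤ × ℤ → Prop) [DecidablePred P] :
    {e : Sym2 (Fin n × Fin n) |
        ∃ v₂ v₃, IsRail G v₀ v₁ v₂ v₃ ∧ P (vec v₀ v₂) ∧ e = s(v₂, v₃)}.ncard ≤
      ((knightMoves \ {vec v₀ v₁, -vec v₀ v₁}).filter P).card := by
  set R := {p : (Fin n × Fin n) × (Fin n × Fin n) | IsRail G v₀ v₁ p.1 p.2 ∧ P (vec v₀ p.1)}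
  have hR : {e : Sym2 (Fin n × Fin n) |
      ∃ v₂ v₃, IsRail G v₀ v₁ v₂ v₃ ∧ P (vec v₀ v₂) ∧ e = s(v₂, v₃)} =
        (fun p => s(p.1, p.2)) '' R := by
    ext e
    simp only [R, Set.mem_ofPred_eq, Set.mem_image, Prod.exists, and_assoc, eq_comm]
  have hmaps : ∀ p ∈ R, vec v₀ p.1 ∈ ((knightMoves \ {vec v₀ v₁, -vec v₀ v₁}).filter P : Set _) :=
    fun p ⟨hr, hP⟩ => Finset.mem_filter.2 ⟨hr.vec_cross_mem, hP⟩
  have hinj : Set.InjOn (fun p => vec v₀ p.1) R := fun p hp q hq h =>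
    Prod.ext_iff.2 (hp.1.eq_of_vec_cross_eq hq.1 h)
  calc _ = ((fun p => s(p.1, p.2)) '' R).ncard := by rw [hR]
    _ ≤ R.ncard := Set.ncard_image_le
    _ ≤ _ := (Set.ncard_le_ncard_of_injOn _ hmaps hinj).trans_eq (Set.ncard_coe_finset _)

theorem edge_in_few_rails (n : ℕ) (G : SimpleGraph (Fin n × Fin n))
    (hG : G ≤ knightsGraph n) (v₀ v₁ : Fin n × Fin n) (h : G.Adj v₀ v₁) :
    ({ e : Sym2 (Fin n × Fin n) |
        ∃ v₂ v₃, IsRail G v₀ v₁ v₂ v₃ ∧ 0 < (vec v₀ v₂).1 ∧ e = s(v₂, v₃) }.ncard ≤ 3) ∧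
    ({ e : Sym2 (Fin n × Fin n) |
        ∃ v₂ v₃, IsRail G v₀ v₁ v₂ v₃ ∧ e = s(v₂, v₃) }.ncard ≤ 6) := by
  have hw : vec v₀ v₁ ∈ knightMoves := vec_mem_knightMoves (hG h)
  constructor
  · exact (ncard_railPartners_le G v₀ v₁ (fun d => 0 < d.1)).trans_eq
      (card_filter_fst_pos_knightMoves_sdiff _ hw)
  · simpa [card_knightMoves_sdiff _ hw] using ncard_railPartners_le G v₀ v₁ (fun _ => True)
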